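/- Fix 0 ≤ i ≤ n, let λ be a p-adic unit, and suppose ord(b_j) ≥ j/(p−1). If u ∈ ℤ^n, u ≠ ε_i, with w(u) ≤ i, then every term b_{m_1}···b_{m_n}·b_ℓ·λ^ℓ in B(p·u − ε_i) (with (m,ℓ) ∈ I(p·u − ε_i)) has ord strictly greater than w(u); hence ord(B(p·u − ε_i)) > w(u). -/

import Mathlib

/-- `m(u) = max {0, -u_1, ..., -u_n}` as an integer. -/
def mneg {n : ℕ} (u : Fin n → ℤ) : ℤ :=
  ((Finset.univ.sup fun i => (-u i).toNat : ℕ) : ℤ)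

/-- The polyhedral weight `w(u) = Σ u_i + (n+1)·m(u)`. -/
def wgt {n : ℕ} (u : Fin n → ℤ) : ℤ :=
  (∑ i, u i) + (n + 1) * mneg u

/-- The index set `I(u) = {(m_1,…,m_n,ℓ) ∈ ℤ_{≥0}^{n+1} : m_i - ℓ = u_i for all i}`. -/
def Iset (n : ℕ) (u : Fin n → ℤ) : Type :=
  {ml : (Fin n → ℕ) × ℕ // ∀ i, (ml.1 i : ℤ) - (ml.2 : ℤ) = u i}

/-- The term `b_{m_1} ⋯ b_{m_n} · b_ℓ · λ^ℓ` of the series `B(u)`. -/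
def klTerm {n : ℕ} {K : Type} [Field K] (b : ℕ → K) (lam : K)
    (ml : (Fin n → ℕ) × ℕ) : K :=
  (∏ i, b (ml.1 i)) * b ml.2 * lam ^ ml.2

/-- `ε_i = e_1 + ⋯ + e_i ∈ ℤⁿ` (so `ε_0 = 0`). -/
def epsvec (n i : ℕ) : Fin n → ℤ := fun j => if (j : ℕ) < i then 1 else 0

lemma mneg_nonneg {n : ℕ} (u : Fin n → ℤ) : 0 ≤ mneg u := Int.ofNat_nonneg _

lemma neg_le_mneg {n : ℕ} (u : Fin n → ℤ) (k : Fin n) : -u k ≤ mneg u := by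
  have h1 : (-u k) ≤ ((-u k).toNat : ℤ) := Int.self_le_toNat _
  have h2 : (-u k).toNat ≤ Finset.univ.sup fun i => (-u i).toNat :=
    Finset.le_sup (f := fun i => (-u i).toNat) (Finset.mem_univ k)
  unfold mneg; exact h1.trans (by exact_mod_cast h2)

lemma mneg_le {n : ℕ} (u : Fin n → ℤ) (c : ℤ) (hc : 0 ≤ c)
    (h : ∀ k, -u k ≤ c) : mneg u ≤ c := by
  obtain ⟨m, rfl⟩ := Int.eq_ofNat_of_zero_le hc
  have : (Finset.univ.sup fun i => (-u i).toNat) ≤ m := by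
    apply Finset.sup_le
    intro k _
    exact Int.toNat_le.mpr (h k)
  unfold mneg; exact_mod_cast this

lemma sum_epsvec (n i : ℕ) (hi : i ≤ n) : ∑ j, epsvec n i j = (i : ℤ) := by
  unfold epsvec
  rw [Fin.sum_univ_eq_sum_range (fun j => if j < i then (1:ℤ) else 0)]
  have : (Finset.range n).filter (· < i) = Finset.range i := by
    ext x; simp [Finset.mem_filter, Finset.mem_range]; omega
  rw [← Finset.sum_filter, this]
  simp

/-- The key combinatorial inequality: `w(p·u - ε_i) > (p-1)·w(u)` when
`u ≠ ε_i` and `w(u) ≤ i ≤ n`. -/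
lemma key_wgt (p n i : ℕ) (hp : 2 ≤ p) (hi : i ≤ n) (u : Fin n → ℤ)
    (hu : u ≠ epsvec n i) (hw : wgt u ≤ (i : ℤ)) :
    ((p : ℤ) - 1) * wgt u < wgt (fun j => (p : ℤ) * u j - epsvec n i j) := by
  set M := mneg u with hM
  set S := ∑ j, u j with hS
  have hM0 : 0 ≤ M := mneg_nonneg u
  have hukM : ∀ k, -M ≤ u k := fun k => by linarith [neg_le_mneg u k]
  have hwM : M ≤ wgt u := by
    have h1 : ∑ j, (-M : ℤ) ≤ S := Finset.sum_le_sum (fun j _ => hukM j)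
    simp only [Finset.sum_const, Finset.card_univ, Fintype.card_fin, smul_eq_mul,
      nsmul_eq_mul] at h1
    have h2 : wgt u = S + (n+1)*M := rfl
    rw [h2]; nlinarith
  have hSv : ∑ j, ((p : ℤ) * u j - epsvec n i j) = p * S - i := by
    rw [Finset.sum_sub_distrib, ← Finset.mul_sum, sum_epsvec n i hi]
  have hwv : wgt (fun j => (p : ℤ) * u j - epsvec n i j)
      = p * S - i + (n+1) * mneg (fun j => (p : ℤ) * u j - epsvec n i j) := by
    unfold wgt; rw [hSv]
  by_cases H : ∃ k : Fin n, (k : ℕ) < i ∧ u k ≤ -M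
  · obtain ⟨k, hk, hku⟩ := H
    have huk : u k = -M := le_antisymm hku (hukM k)
    have heps : epsvec n i k = 1 := if_pos hk
    have hmv : (p : ℤ) * M + 1 ≤ mneg (fun j => (p : ℤ) * u j - epsvec n i j) := by
      have := neg_le_mneg (fun j => (p : ℤ) * u j - epsvec n i j) k
      simp only [huk, heps] at this
      linarith
    have hw0 : 0 ≤ wgt u := hM0.trans hwM
    have hmul : ((n : ℤ)+1) * ((p : ℤ) * M + 1)
        ≤ (n+1) * mneg (fun j => (p : ℤ) * u j - epsvec n i j) := by
      apply mul_le_mul_of_nonneg_left hmv; positivity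
    have hwgtu : wgt u = S + (n+1)*M := rfl
    have hin : (i : ℤ) ≤ n := by exact_mod_cast hi
    have hp2 : (2 : ℤ) ≤ p := by exact_mod_cast hp
    rw [hwv]
    nlinarith
  · push_neg at H
    have hge : ∀ j, epsvec n i j - M ≤ u j := by
      intro j
      by_cases hj : (j : ℕ) < i
      · have := H j hj
        simp [epsvec, hj]; linarith
      · simp [epsvec, hj]; linarith [hukM j]
    have hSlow : (i : ℤ) - n * M ≤ S := by
      have h1 : ∑ j, (epsvec n i j - M) ≤ S := Finset.sum_le_sum (fun j _ => hge j)
      rw [Finset.sum_sub_distrib, sum_epsvec n i hi] at h1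
      simp only [Finset.sum_const, Finset.card_univ, Fintype.card_fin, smul_eq_mul,
        nsmul_eq_mul] at h1
      linarith
    rcases eq_or_lt_of_le hM0 with hM00 | hM1
    · -- M = 0
      exfalso
      have hM0' : M = 0 := hM00.symm
      have hge' : ∀ j, epsvec n i j ≤ u j := fun j => by linarith [hge j]
      obtain ⟨j0, hj0⟩ : ∃ j, u j ≠ epsvec n i j := by
        by_contra hc; push_neg at hc; exact hu (funext hc)
      have hlt : ∑ j, epsvec n i j < S :=
        Finset.sum_lt_sum (fun j _ => hge' j)
          ⟨j0, Finset.mem_univ j0, lt_of_le_of_ne (hge' j0) (Ne.symm hj0)⟩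
      rw [sum_epsvec n i hi] at hlt
      have hwu : wgt u = S + (n+1)*M := rfl
      rw [hwu, hM0'] at hw
      simp at hw
      linarith
    · -- 1 ≤ M : contradiction
      exfalso
      have hwgtu : wgt u = S + (n+1)*M := rfl
      nlinarith [hw, hSlow, hwgtu]

lemma hord_one' {K : Type} [Field K]
    (ord : K → WithTop ℝ)
    (hord_top : ∀ x : K, ord x = ⊤ ↔ x = 0)
    (hord_mul : ∀ x y : K, ord (x * y) = ord x + ord y) :
    ord 1 = ((0:ℝ) : WithTop ℝ) := by
  have h := hord_mul 1 1
  rw [one_mul] at h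
  cases h1 : ord (1 : K) with
  | top => exact absurd ((hord_top 1).mp h1) one_ne_zero
  | coe x =>
    rw [h1, ← WithTop.coe_add, WithTop.coe_eq_coe] at h
    have : x = 0 := by linarith
    rw [this]

lemma hord_pow_zero' {K : Type} [Field K]
    (ord : K → WithTop ℝ)
    (hord_top : ∀ x : K, ord x = ⊤ ↔ x = 0)
    (hord_mul : ∀ x y : K, ord (x * y) = ord x + ord y)
    (lam : K) (hlam : ord lam = ((0:ℝ) : WithTop ℝ)) (ℓ : ℕ) :
    ord (lam ^ ℓ) = ((0:ℝ) : WithTop ℝ) := by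
  induction ℓ with
  | zero => simpa using hord_one' ord hord_top hord_mul
  | succ k ih =>
    rw [pow_succ, hord_mul, ih, hlam]
    norm_num

lemma hord_prod_ge' {K : Type} [Field K]
    (ord : K → WithTop ℝ)
    (hord_top : ∀ x : K, ord x = ⊤ ↔ x = 0)
    (hord_mul : ∀ x y : K, ord (x * y) = ord x + ord y)
    {ι : Type*} (s : Finset ι) (f : ι → K) (r : ι → ℝ)
    (h : ∀ j ∈ s, ((r j : ℝ) : WithTop ℝ) ≤ ord (f j)) :
    (((∑ j ∈ s, r j : ℝ)) : WithTop ℝ) ≤ ord (∏ j ∈ s, f j) := by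
  classical
  induction s using Finset.induction with
  | empty => simp [hord_one' ord hord_top hord_mul]
  | insert _ _ ha ih =>
    rename_i a s'
    rw [Finset.sum_insert ha, Finset.prod_insert ha, hord_mul, WithTop.coe_add]
    exact add_le_add (h a (Finset.mem_insert_self a s'))
      (ih (fun j hj => h j (Finset.mem_insert_of_mem hj)))

lemma hord_sum_gt' {K : Type} [Field K]
    (ord : K → WithTop ℝ)
    (hord_top : ∀ x : K, ord x = ⊤ ↔ x = 0)
    (hord_add : ∀ x y : K, min (ord x) (ord y) ≤ ord (x + y))
    {ι : Type*} (s : Finset ι) (f : ι → K) (c : ℝ)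
    (h : ∀ j ∈ s, ((c : ℝ) : WithTop ℝ) < ord (f j)) :
    ((c : ℝ) : WithTop ℝ) < ord (∑ j ∈ s, f j) := by
  classical
  induction s using Finset.induction with
  | empty =>
    rw [Finset.sum_empty, (hord_top 0).mpr rfl]
    exact WithTop.coe_lt_top c
  | insert _ _ ha ih =>
    rename_i a s'
    rw [Finset.sum_insert ha]
    refine lt_of_lt_of_le ?_ (hord_add _ _)
    exact lt_min (h a (Finset.mem_insert_self a s'))
      (ih (fun j hj => h j (Finset.mem_insert_of_mem hj)))

/-- fix `0 ≤ i ≤ n` and a `p`-adic unit `λ`, and suppose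
`ord (b_j) ≥ j/(p-1)`.  If `u ≠ ε_i` and `w(u) ≤ i`, then every term
`b_{m_1}⋯b_{m_n} b_ℓ λ^ℓ` of `B(p·u - ε_i)` (indexed by `I(p·u - ε_i)`) has
`ord` strictly greater than `w(u)`; hence `ord (B(p·u - ε_i)) > w(u)`. -/
theorem ord_B_offdiag_gt (p n : ℕ) (hp : p.Prime) (hn : 1 ≤ n)
    {K : Type} [Field K] [CharZero K]
    (ord : K → WithTop ℝ)
    (hord_top : ∀ x : K, ord x = ⊤ ↔ x = 0)
    (hord_mul : ∀ x y : K, ord (x * y) = ord x + ord y)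
    (hord_add : ∀ x y : K, min (ord x) (ord y) ≤ ord (x + y))
    (hord_neg : ∀ x : K, ord (-x) = ord x)
    (hord_p : ord (p : K) = ((1 : ℝ) : WithTop ℝ))
    (b : ℕ → K)
    (hbord : ∀ j : ℕ, ((((j : ℝ) / ((p : ℝ) - 1)) : ℝ) : WithTop ℝ) ≤ ord (b j))
    (lam : K) (hlam : ord lam = ((0 : ℝ) : WithTop ℝ))
    (i : ℕ) (hi : i ≤ n)
    (u : Fin n → ℤ) (hu : u ≠ epsvec n i) (hw : wgt u ≤ (i : ℤ))
    (Bv : K)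
    (hconv : ∀ M : ℝ,
      ∃ s : Finset (Iset n (fun j => (p : ℤ) * u j - epsvec n i j)),
      ∀ t : Finset (Iset n (fun j => (p : ℤ) * u j - epsvec n i j)), s ⊆ t →
        (M : WithTop ℝ) ≤ ord (Bv - ∑ ml ∈ t, klTerm b lam ml.1)) :
    (∀ ml : Iset n (fun j => (p : ℤ) * u j - epsvec n i j),
        (((wgt u : ℝ)) : WithTop ℝ) < ord (klTerm b lam ml.1)) ∧
      (((wgt u : ℝ)) : WithTop ℝ) < ord Bv := by
  have hp2 : 2 ≤ p := hp.two_le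
  have hkey := key_wgt p n i hp2 hi u hu hw
  have hR : (0 : ℝ) < (p : ℝ) - 1 := by
    have : (2 : ℝ) ≤ p := by exact_mod_cast hp2
    linarith
  -- Part 1
  have part1 : ∀ ml : Iset n (fun j => (p : ℤ) * u j - epsvec n i j),
      (((wgt u : ℝ)) : WithTop ℝ) < ord (klTerm b lam ml.1) := by
    rintro ⟨⟨m, ℓ⟩, hml⟩
    simp only at hml
    -- ℓ bounds mneg of v
    have hlv : mneg (fun j => (p : ℤ) * u j - epsvec n i j) ≤ (ℓ : ℤ) := by
      apply mneg_le _ _ (Int.ofNat_nonneg _)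
      intro k
      have := hml k
      have hm0 : (0 : ℤ) ≤ (m k : ℤ) := Int.ofNat_nonneg _
      linarith
    -- sum of m's
    have hsum_m : ∑ j, ((m j : ℤ)) = (∑ j, ((p : ℤ) * u j - epsvec n i j)) + n * ℓ := by
      have : ∀ j : Fin n, (m j : ℤ) = ((p : ℤ) * u j - epsvec n i j) + ℓ := by
        intro j; linarith [hml j]
      rw [Finset.sum_congr rfl (fun j _ => this j), Finset.sum_add_distrib]
      simp [mul_comm]
    -- integer inequality
    have hX : ((p : ℤ) - 1) * wgt u + 1 ≤ (∑ j, ((m j : ℤ))) + ℓ := by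
      have hwv : wgt (fun j => (p : ℤ) * u j - epsvec n i j)
          = (∑ j, ((p : ℤ) * u j - epsvec n i j))
            + (n+1) * mneg (fun j => (p : ℤ) * u j - epsvec n i j) := rfl
      have h2 : wgt (fun j => (p : ℤ) * u j - epsvec n i j)
          ≤ (∑ j, ((m j : ℤ))) + ℓ := by
        rw [hwv, hsum_m]
        nlinarith [hlv]
      linarith
    -- ord lower bound for the product
    have h1 : (((∑ j, ((m j : ℝ) / ((p : ℝ) - 1))) : ℝ) : WithTop ℝ)
        ≤ ord (∏ j, b (m j)) :=
      hord_prod_ge' ord hord_top hord_mul Finset.univ (fun j => b (m j))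
        (fun j => (m j : ℝ) / ((p : ℝ) - 1)) (fun j _ => hbord (m j))
    have h2 : ((((ℓ : ℝ) / ((p : ℝ) - 1)) : ℝ) : WithTop ℝ) ≤ ord (b ℓ) := hbord ℓ
    have h3 : ord (lam ^ ℓ) = ((0 : ℝ) : WithTop ℝ) :=
      hord_pow_zero' ord hord_top hord_mul lam hlam ℓ
    have hterm : ord (klTerm b lam (m, ℓ))
        = ord (∏ j, b (m j)) + ord (b ℓ) + ord (lam ^ ℓ) := by
      unfold klTerm
      rw [hord_mul, hord_mul]
    have hlow : ((((∑ j, ((m j : ℝ))) + ℓ) / ((p : ℝ) - 1) : ℝ) : WithTop ℝ)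
        ≤ ord (klTerm b lam (m, ℓ)) := by
      rw [hterm]
      have heq : ((∑ j, ((m j : ℝ))) + ℓ) / ((p : ℝ) - 1)
          = (∑ j, ((m j : ℝ) / ((p : ℝ) - 1))) + ((ℓ : ℝ) / ((p : ℝ) - 1)) + 0 := by
        rw [← Finset.sum_div]
        ring
      rw [heq, WithTop.coe_add, WithTop.coe_add]
      exact add_le_add (add_le_add h1 h2) (le_of_eq h3.symm)
    refine lt_of_lt_of_le ?_ hlow
    rw [WithTop.coe_lt_coe, lt_div_iff₀ hR]
    have hXr : ((p : ℝ) - 1) * (wgt u : ℝ) + 1 ≤ (∑ j, ((m j : ℝ))) + ℓ := by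
      have := hX
      have hcast : ((∑ j, ((m j : ℤ)) : ℤ) : ℝ) = ∑ j, ((m j : ℝ)) := by push_cast; rfl
      calc ((p : ℝ) - 1) * (wgt u : ℝ) + 1
          = ((((p : ℤ) - 1) * wgt u + 1 : ℤ) : ℝ) := by push_cast; ring
        _ ≤ (((∑ j, ((m j : ℤ))) + ℓ : ℤ) : ℝ) := by exact_mod_cast hX
        _ = (∑ j, ((m j : ℝ))) + ℓ := by push_cast; rfl
    nlinarith
  refine ⟨part1, ?_⟩
  -- Part 2
  obtain ⟨s, hs⟩ := hconv ((wgt u : ℝ) + 1)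
  have h1 := hs s (subset_refl s)
  have h2 : (((wgt u : ℝ)) : WithTop ℝ) < ord (∑ ml ∈ s, klTerm b lam ml.1) :=
    hord_sum_gt' ord hord_top hord_add s (fun ml => klTerm b lam ml.1) _
      (fun j _ => part1 j)
  have h3 : (Bv - ∑ ml ∈ s, klTerm b lam ml.1) + ∑ ml ∈ s, klTerm b lam ml.1 = Bv := by
    ring
  have h4 := hord_add (Bv - ∑ ml ∈ s, klTerm b lam ml.1) (∑ ml ∈ s, klTerm b lam ml.1)
  rw [h3] at h4
  refine lt_of_lt_of_le ?_ h4
  apply lt_min ?_ h2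
  refine lt_of_lt_of_le ?_ h1
  rw [WithTop.coe_lt_coe]
  linarith
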